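/- Let K ⊂ R^n be compact, ν a probability measure on K, and Q a continuous admissible weight. Then for every probability measure μ on K, J̄^Q(μ) = J̄(μ) · e^{-2∫_K Q dμ}, where J̄^Q and J̄ are the weighted and unweighted upper J-functionals (and the same identity holds for the lower functionals J̲^Q and J̲). -/

import Mathlib

open MeasureTheory Filter Topology
open scoped ENNReal BigOperators

noncomputable section

/-- The logarithmic kernel `log(1/|x-y|)`. -/
def logKer {E : Type*} [NormedAddCommGroup E] (x y : E) : ℝ := Real.log (1 / ‖x - y‖)

/-- The nonnegative part of an extended real, as an element of `ℝ≥0∞`. -/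
def erealToENN (q : EReal) : ℝ≥0∞ := if q = ⊤ then ⊤ else ENNReal.ofReal q.toReal

/-- Integral of an `EReal`-valued function: positive part minus negative part. -/
def eInt {α : Type*} [MeasurableSpace α] (μ : Measure α) (f : α → EReal) : EReal :=
  ((∫⁻ a, erealToENN (f a) ∂μ : ℝ≥0∞) : EReal) - ((∫⁻ a, erealToENN (-(f a)) ∂μ : ℝ≥0∞) : EReal)

/-- The weighted logarithmic energy `I^Q(μ) = ∬ log(1/(|x-y| w(x) w(y))) dμ dμ`
for a weight `Q : E → (-∞,∞]` (with `w = e^{-Q}`), as an extended real. -/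
def energyQ {E : Type*} [NormedAddCommGroup E] [MeasurableSpace E]
    (Q : E → EReal) (μ : Measure E) : EReal :=
  eInt (μ.prod μ) (fun p => ((logKer p.1 p.2 : ℝ) : EReal) + Q p.1 + Q p.2)

/-- The logarithmic potential `U^μ(x) = ∫ log(1/|x-y|) dμ(y)`, as an extended real. -/
def Upot {E : Type*} [NormedAddCommGroup E] [MeasurableSpace E]
    (μ : Measure E) (x : E) : EReal :=
  eInt μ (fun y => ((logKer x y : ℝ) : EReal))

/-- Infinite logarithmic energy. -/
def InfiniteLogEnergy {E : Type*} [NormedAddCommGroup E] [MeasurableSpace E]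
    (μ : Measure E) : Prop :=
  ∫⁻ p : E × E, ENNReal.ofReal (logKer p.1 p.2) ∂(μ.prod μ) = ⊤

/-- A set is log-polar if every probability measure supported on a compact subset of it
has infinite logarithmic energy. -/
def IsLogPolarSet {E : Type*} [NormedAddCommGroup E] [MeasurableSpace E]
    (S : Set E) : Prop :=
  ∀ μ : Measure E, IsProbabilityMeasure μ →
    (∃ C, IsCompact C ∧ C ⊆ S ∧ μ C = 1) → InfiniteLogEnergy μ

/-- The weight function `w = e^{-Q}` associated with `Q : E → (-∞,∞]`. -/
def wfun {E : Type*} (Q : E → EReal) (x : E) : ℝ :=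
  if Q x = ⊤ then 0 else Real.exp (-(Q x).toReal)

/-- The weighted Vandermonde `|VDM_k^Q(x₁,…,x_k)| = ∏_{i<j} |x_i-x_j| w(x_i) w(x_j)`. -/
def VDMw {E : Type*} [NormedAddCommGroup E] (Q : E → EReal) (k : ℕ) (x : Fin k → E) : ℝ :=
  ∏ i : Fin k, ∏ j ∈ Finset.Ioi i, (‖x i - x j‖ * wfun Q (x i) * wfun Q (x j))

/-- The extremal weighted energy `V_w = inf {I^Q(μ) : μ ∈ M(K)}`. -/
def VwDef {E : Type*} [NormedAddCommGroup E] [MeasurableSpace E]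
    (K : Set E) (Q : E → EReal) : EReal :=
  sInf {e | ∃ μ : Measure E, IsProbabilityMeasure μ ∧ μ Kᶜ = 0 ∧ e = energyQ Q μ}

/-- Exponential `EReal → ℝ≥0∞`. -/
def expE (q : EReal) : ℝ≥0∞ :=
  if q = ⊤ then ⊤ else if q = ⊥ then 0 else ENNReal.ofReal (Real.exp q.toReal)

/-- The empirical measure `(1/k) ∑ δ_{a_j}` of a configuration. -/
def empMeas {E : Type*} [MeasurableSpace E] (k : ℕ) (a : Fin k → E) : Measure E :=
  (k : ℝ≥0∞)⁻¹ • ∑ j : Fin k, Measure.dirac (a j)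

/-- `J_k^Q(G) = (∫_{G̃_k} |VDM_k^Q(a)|² dν(a))^{1/(k(k-1))}` where
`G̃_k = {a ∈ K^k : (1/k)∑δ_{a_j} ∈ G}`. -/
def JkQ {n : ℕ} (K : Set (EuclideanSpace ℝ (Fin n)))
    (Q : EuclideanSpace ℝ (Fin n) → EReal)
    (ν : Measure (EuclideanSpace ℝ (Fin n))) [SigmaFinite ν]
    (G : Set (ProbabilityMeasure (EuclideanSpace ℝ (Fin n)))) (k : ℕ) : ℝ≥0∞ :=
  (∫⁻ a : Fin k → EuclideanSpace ℝ (Fin n) in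
      {a | (∀ i, a i ∈ K) ∧
        ∃ h : IsProbabilityMeasure (empMeas k a),
          (⟨empMeas k a, h⟩ : ProbabilityMeasure (EuclideanSpace ℝ (Fin n))) ∈ G},
    ENNReal.ofReal (VDMw Q k a ^ 2) ∂(Measure.pi fun _ => ν)) ^ ((1 : ℝ) / (k * (k - 1)))

/-- `J̄^Q(μ) = inf_{G ∋ μ open} limsup_k J_k^Q(G)`. -/
def JbarQ {n : ℕ} (K : Set (EuclideanSpace ℝ (Fin n)))
    (Q : EuclideanSpace ℝ (Fin n) → EReal)
    (ν : Measure (EuclideanSpace ℝ (Fin n))) [SigmaFinite ν]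
    (μ : ProbabilityMeasure (EuclideanSpace ℝ (Fin n))) : ℝ≥0∞ :=
  ⨅ (G : Set (ProbabilityMeasure (EuclideanSpace ℝ (Fin n)))) (_ : IsOpen G) (_ : μ ∈ G),
    Filter.limsup (fun k => JkQ K Q ν G k) atTop

/-- `J̲^Q(μ) = inf_{G ∋ μ open} liminf_k J_k^Q(G)`. -/
def JlowQ {n : ℕ} (K : Set (EuclideanSpace ℝ (Fin n)))
    (Q : EuclideanSpace ℝ (Fin n) → EReal)
    (ν : Measure (EuclideanSpace ℝ (Fin n))) [SigmaFinite ν]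
    (μ : ProbabilityMeasure (EuclideanSpace ℝ (Fin n))) : ℝ≥0∞ :=
  ⨅ (G : Set (ProbabilityMeasure (EuclideanSpace ℝ (Fin n)))) (_ : IsOpen G) (_ : μ ∈ G),
    Filter.liminf (fun k => JkQ K Q ν G k) atTop

-- AUX START
lemma aux_sum_Ioi (k : ℕ) (f : Fin k → ℝ) :
    ∑ i : Fin k, ∑ j ∈ Finset.Ioi i, (f i + f j) = ((k - 1 : ℕ) : ℝ) * ∑ i, f i := by
  have swap : ∑ i : Fin k, ∑ j ∈ Finset.Ioi i, f j
      = ∑ j : Fin k, ∑ _i ∈ Finset.Iio j, f j := by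
    refine Finset.sum_comm' ?_
    intro x y
    simp [Finset.mem_Ioi, Finset.mem_Iio]
  have h1 : ∀ i : Fin k, ∑ j ∈ Finset.Ioi i, (f i + f j)
      = ((Finset.Ioi i).card : ℝ) * f i + ∑ j ∈ Finset.Ioi i, f j := by
    intro i; rw [Finset.sum_add_distrib, Finset.sum_const, nsmul_eq_mul]
  rw [Finset.sum_congr rfl fun i _ => h1 i, Finset.sum_add_distrib, swap]
  have h2 : ∀ j : Fin k, ∑ _i ∈ Finset.Iio j, f j = ((Finset.Iio j).card : ℝ) * f j := by
    intro j; rw [Finset.sum_const, nsmul_eq_mul]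
  rw [Finset.sum_congr rfl fun j _ => h2 j, ← Finset.sum_add_distrib, Finset.mul_sum]
  refine Finset.sum_congr rfl fun i _ => ?_
  rw [Fin.card_Ioi, Fin.card_Iio]
  have hn : (k - 1 - (i : ℕ)) + (i : ℕ) = k - 1 := Nat.sub_add_cancel (Nat.le_sub_one_of_lt i.isLt)
  have hc : ((k - 1 - (i:ℕ) : ℕ) : ℝ) + ((i:ℕ) : ℝ) = ((k - 1 : ℕ) : ℝ) := by
    rw [← Nat.cast_add, hn]
  linear_combination f i * hc

lemma wfun_zero {E : Type*} (x : E) : wfun (fun _ : E => (0 : EReal)) x = 1 := by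
  simp [wfun]

lemma wfun_coe {E : Type*} (Q : E → ℝ) (x : E) :
    wfun (fun y => ((Q y : ℝ) : EReal)) x = Real.exp (-(Q x)) := by
  simp [wfun]

lemma aux_VDM {E : Type*} [NormedAddCommGroup E] (Q : E → ℝ) (k : ℕ) (x : Fin k → E) :
    VDMw (fun y => ((Q y : ℝ) : EReal)) k x
      = VDMw (fun _ => (0 : EReal)) k x
          * Real.exp (-(((k - 1 : ℕ) : ℝ) * ∑ j, Q (x j))) := by
  unfold VDMw
  simp only [wfun_coe, wfun_zero, mul_one]
  have h1 : ∀ i j : Fin k, ‖x i - x j‖ * Real.exp (-Q (x i)) * Real.exp (-Q (x j))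
      = ‖x i - x j‖ * Real.exp (-(Q (x i) + Q (x j))) := by
    intro i j; rw [mul_assoc, neg_add, Real.exp_add]
  simp only [h1]
  simp only [Finset.prod_mul_distrib]
  simp only [← Real.exp_sum]
  congr 1
  simp only [Finset.sum_neg_distrib]
  rw [aux_sum_Ioi k (fun j => Q (x j))]

lemma aux_limsup_mul_const (u : ℕ → ℝ≥0∞) (c : ℝ≥0∞) (hct : c ≠ ⊤) :
    Filter.limsup (fun k => u k * c) Filter.atTop = Filter.limsup u Filter.atTop * c := by
  rw [mul_comm (Filter.limsup u Filter.atTop) c,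
    show (fun k => u k * c) = fun k => c * u k from funext fun k => mul_comm _ _]
  exact ENNReal.limsup_const_mul_of_ne_top hct

lemma aux_liminf_mul_const (u : ℕ → ℝ≥0∞) (c : ℝ≥0∞) (hc0 : c ≠ 0) (hct : c ≠ ⊤) :
    Filter.liminf (fun k => u k * c) Filter.atTop = Filter.liminf u Filter.atTop * c := by
  have hmono : Monotone (fun x : ℝ≥0∞ => x * c) := fun a b h => mul_le_mul_left h c
  have hcont : Continuous (fun x : ℝ≥0∞ => x * c) := by
    simpa [mul_comm] using ENNReal.continuous_const_mul (a := c) hct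
  exact (hmono.map_liminf_of_continuousAt u hcont.continuousAt).symm

lemma aux_le_of_forall_exp (a b : ℝ≥0∞)
    (h : ∀ ε : ℝ, 0 < ε → a ≤ b * ENNReal.ofReal (Real.exp ε)) : a ≤ b := by
  have h1 : Filter.Tendsto (fun ε : ℝ => ENNReal.ofReal (Real.exp ε)) (𝓝 0) (𝓝 1) := by
    have hc : Continuous fun ε : ℝ => ENNReal.ofReal (Real.exp ε) :=
      ENNReal.continuous_ofReal.comp Real.continuous_exp
    simpa using hc.tendsto 0
  have ht : Filter.Tendsto (fun ε : ℝ => b * ENNReal.ofReal (Real.exp ε))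
      (𝓝[Set.Ioi (0:ℝ)] 0) (𝓝 (b * 1)) :=
    ENNReal.Tendsto.const_mul (h1.mono_left nhdsWithin_le_nhds) (Or.inl one_ne_zero)
  rw [mul_one] at ht
  exact ge_of_tendsto ht (eventually_nhdsWithin_of_forall fun ε hε => h ε hε)

lemma aux_le_mul_iff {a b c : ℝ≥0∞} (hc0 : c ≠ 0) (hct : c ≠ ⊤) :
    a ≤ b * c ↔ a * c⁻¹ ≤ b := by
  rw [← ENNReal.div_le_iff_le_mul (Or.inl hc0) (Or.inl hct), div_eq_mul_inv]

lemma aux_ofReal_exp_mul (a b : ℝ) :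
    ENNReal.ofReal (Real.exp a) * ENNReal.ofReal (Real.exp b)
      = ENNReal.ofReal (Real.exp (a + b)) := by
  rw [Real.exp_add, ENNReal.ofReal_mul (Real.exp_nonneg a)]


lemma aux_JkQ_le {n : ℕ} (K : Set (EuclideanSpace ℝ (Fin n)))
    (Q1 Q2 : EuclideanSpace ℝ (Fin n) → EReal)
    (ν : Measure (EuclideanSpace ℝ (Fin n))) [SigmaFinite ν]
    (G1 G2 : Set (ProbabilityMeasure (EuclideanSpace ℝ (Fin n))))
    (hsub : G1 ⊆ G2) (k : ℕ) (hr : 0 ≤ (1:ℝ) / (k * (k - 1))) {C : ℝ} (hC : 0 < C)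
    (hcont : Continuous fun a : Fin k → EuclideanSpace ℝ (Fin n) => VDMw Q2 k a)
    (hpt : ∀ a : Fin k → EuclideanSpace ℝ (Fin n),
      ((∀ i, a i ∈ K) ∧ ∃ h : IsProbabilityMeasure (empMeas k a),
          (⟨empMeas k a, h⟩ : ProbabilityMeasure (EuclideanSpace ℝ (Fin n))) ∈ G1) →
      VDMw Q1 k a ^ 2 ≤ VDMw Q2 k a ^ 2 * C) :
    JkQ K Q1 ν G1 k ≤ JkQ K Q2 ν G2 k * ENNReal.ofReal (C ^ ((1:ℝ) / (k * (k - 1)))) := by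
  unfold JkQ
  rw [← ENNReal.ofReal_rpow_of_pos hC, ← ENNReal.mul_rpow_of_nonneg _ _ hr]
  refine ENNReal.rpow_le_rpow ?_ hr
  have hm : Measurable fun a : Fin k → EuclideanSpace ℝ (Fin n) =>
      ENNReal.ofReal (VDMw Q2 k a ^ 2) * ENNReal.ofReal C :=
    ((ENNReal.measurable_ofReal.comp (hcont.pow 2).measurable)).mul_const _
  refine le_trans (setLIntegral_mono hm fun a ha => ?_) ?_
  · rw [← ENNReal.ofReal_mul (sq_nonneg _)]
    exact ENNReal.ofReal_le_ofReal (hpt a ha)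
  · rw [lintegral_mul_const' _ _ ENNReal.ofReal_ne_top]
    refine mul_le_mul_left (lintegral_mono_set ?_) _
    rintro a ⟨h1, h, h2⟩
    exact ⟨h1, h, hsub h2⟩

/-- For continuous `Q`, `J̄^Q(μ) = J̄(μ) e^{-2∫Q dμ}`, and likewise for the lower
functionals. -/
theorem stmt18 {n : ℕ} (hn : 2 ≤ n) (K : Set (EuclideanSpace ℝ (Fin n)))
    (hK : IsCompact K) (hKnp : ¬ IsLogPolarSet K)
    (Q : EuclideanSpace ℝ (Fin n) → ℝ) (hQc : Continuous Q)
    (ν : Measure (EuclideanSpace ℝ (Fin n))) [IsProbabilityMeasure ν] (hνK : ν Kᶜ = 0)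
    (μ : ProbabilityMeasure (EuclideanSpace ℝ (Fin n)))
    (hμK : (μ : Measure (EuclideanSpace ℝ (Fin n))) Kᶜ = 0) :
    JbarQ K (fun x => ((Q x : ℝ) : EReal)) ν μ =
        JbarQ K (fun _ => (0 : EReal)) ν μ *
          ENNReal.ofReal
            (Real.exp (-2 * ∫ x, Q x ∂(μ : Measure (EuclideanSpace ℝ (Fin n))))) ∧
      JlowQ K (fun x => ((Q x : ℝ) : EReal)) ν μ =
        JlowQ K (fun _ => (0 : EReal)) ν μ *
          ENNReal.ofReal
            (Real.exp (-2 * ∫ x, Q x ∂(μ : Measure (EuclideanSpace ℝ (Fin n))))) := by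
  classical
  set I : ℝ := ∫ x, Q x ∂(μ : Measure (EuclideanSpace ℝ (Fin n))) with hIdef
  obtain ⟨C0, hC0⟩ := hK.exists_bound_of_continuousOn hQc.continuousOn
  set M : ℝ := max C0 0 with hM
  have hM0 : (0:ℝ) ≤ M := le_max_right _ _
  have hMK : ∀ x ∈ K, |Q x| ≤ M := fun x hx =>
    le_trans (by simpa using hC0 x hx) (le_max_left _ _)
  have hcl : Continuous fun x : EuclideanSpace ℝ (Fin n) => max (-M) (min (Q x) M) :=
    continuous_const.max (hQc.min continuous_const)
  set Q' : BoundedContinuousFunction (EuclideanSpace ℝ (Fin n)) ℝ :=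
    BoundedContinuousFunction.ofNormedAddCommGroup _ hcl M (fun x => by
      rw [Real.norm_eq_abs, abs_le]
      exact ⟨le_max_left _ _, max_le (neg_le_self hM0) (min_le_right _ _)⟩) with hQ'def
  have hQ'eq : ∀ x ∈ K, Q' x = Q x := by
    intro x hx
    have h := hMK x hx
    rw [abs_le] at h
    show max (-M) (min (Q x) M) = Q x
    rw [min_eq_left h.2, max_eq_right h.1]
  have haeK : ∀ᵐ x ∂(μ : Measure (EuclideanSpace ℝ (Fin n))), x ∈ K := by
    rw [MeasureTheory.ae_iff]
    exact hμK
  have hIQ' : ∫ x, Q' x ∂(μ : Measure (EuclideanSpace ℝ (Fin n))) = I := by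
    rw [hIdef]
    exact integral_congr_ae (by filter_upwards [haeK] with x hx using hQ'eq x hx)
  have hFc : Continuous fun σ : ProbabilityMeasure (EuclideanSpace ℝ (Fin n)) =>
      ∫ x, Q' x ∂(σ : Measure (EuclideanSpace ℝ (Fin n))) :=
    ProbabilityMeasure.continuous_integral_boundedContinuousFunction Q'
  set U : ℝ → Set (ProbabilityMeasure (EuclideanSpace ℝ (Fin n))) := fun ε =>
    (fun σ : ProbabilityMeasure (EuclideanSpace ℝ (Fin n)) =>
      ∫ x, Q' x ∂(σ : Measure (EuclideanSpace ℝ (Fin n)))) ⁻¹' Set.Ioo (I - ε) (I + ε)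
    with hUdef
  have hUopen : ∀ ε : ℝ, IsOpen (U ε) := fun ε => isOpen_Ioo.preimage hFc
  have hμU : ∀ ε : ℝ, 0 < ε → μ ∈ U ε := by
    intro ε hε
    simp only [hUdef, Set.mem_preimage, Set.mem_Ioo]
    rw [hIQ']
    constructor <;> linarith
  have hemp : ∀ (k : ℕ) (a : Fin k → EuclideanSpace ℝ (Fin n)),
      (∀ i, a i ∈ K) →
      ∫ x, Q' x ∂(empMeas k a) = (k:ℝ)⁻¹ * ∑ j, Q (a j) := by
    intro k a haK
    rw [show empMeas k a = (k : ℝ≥0∞)⁻¹ • ∑ j : Fin k, Measure.dirac (a j) from rfl]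
    rw [integral_smul_measure]
    rw [integral_finset_sum_measure (fun j _ => Q'.integrable _)]
    simp only [integral_dirac]
    rw [Finset.sum_congr rfl fun j _ => hQ'eq _ (haK j)]
    simp [ENNReal.toReal_inv]
  have hsumb : ∀ ε : ℝ, 0 < ε → ∀ k : ℕ, 2 ≤ k →
      ∀ a : Fin k → EuclideanSpace ℝ (Fin n), (∀ i, a i ∈ K) →
      (∃ h : IsProbabilityMeasure (empMeas k a),
        (⟨empMeas k a, h⟩ : ProbabilityMeasure (EuclideanSpace ℝ (Fin n))) ∈ U ε) →
      (k:ℝ) * (I - ε) ≤ ∑ j, Q (a j) ∧ ∑ j, Q (a j) ≤ (k:ℝ) * (I + ε) := by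
    intro ε hε k hk a haK hex
    obtain ⟨h, hmem⟩ := hex
    have hk0 : (0:ℝ) < (k:ℝ) := by
      have hh : 0 < k := by omega
      exact_mod_cast hh
    have hval : ∫ (x : EuclideanSpace ℝ (Fin n)), Q' x
        ∂((⟨empMeas k a, h⟩ : ProbabilityMeasure (EuclideanSpace ℝ (Fin n))) :
          Measure (EuclideanSpace ℝ (Fin n))) = (k:ℝ)⁻¹ * ∑ j, Q (a j) := hemp k a haK
    have hmem' : (I - ε) < (∫ (x : EuclideanSpace ℝ (Fin n)), Q' x
          ∂((⟨empMeas k a, h⟩ : ProbabilityMeasure (EuclideanSpace ℝ (Fin n))) :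
            Measure (EuclideanSpace ℝ (Fin n)))) ∧ (∫ (x : EuclideanSpace ℝ (Fin n)), Q' x
          ∂((⟨empMeas k a, h⟩ : ProbabilityMeasure (EuclideanSpace ℝ (Fin n))) :
            Measure (EuclideanSpace ℝ (Fin n)))) < I + ε := hmem
    rw [hval] at hmem'
    obtain ⟨h1, h2⟩ := hmem'
    have hS : (k:ℝ) * ((k:ℝ)⁻¹ * ∑ j, Q (a j)) = ∑ j, Q (a j) := by
      field_simp
    constructor
    · have hmm := mul_le_mul_of_nonneg_left h1.le hk0.le
      rwa [hS] at hmm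
    · have hmm := mul_le_mul_of_nonneg_left h2.le hk0.le
      rwa [hS] at hmm
  have hcontZ : ∀ k : ℕ, Continuous fun a : Fin k → EuclideanSpace ℝ (Fin n) =>
      VDMw (fun _ => (0:EReal)) k a := by
    intro k
    unfold VDMw
    simp only [wfun_zero, mul_one]
    refine continuous_finset_prod _ fun i _ => continuous_finset_prod _ fun j _ => ?_
    exact ((continuous_apply i).sub (continuous_apply j)).norm
  have hcontQ : ∀ k : ℕ, Continuous fun a : Fin k → EuclideanSpace ℝ (Fin n) =>
      VDMw (fun y => ((Q y : ℝ) : EReal)) k a := by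
    intro k
    unfold VDMw
    simp only [wfun_coe]
    refine continuous_finset_prod _ fun i _ => continuous_finset_prod _ fun j _ => ?_
    have hQi : Continuous fun a : Fin k → EuclideanSpace ℝ (Fin n) =>
        Real.exp (-Q (a i)) := Real.continuous_exp.comp (hQc.comp (continuous_apply i)).neg
    have hQj : Continuous fun a : Fin k → EuclideanSpace ℝ (Fin n) =>
        Real.exp (-Q (a j)) := Real.continuous_exp.comp (hQc.comp (continuous_apply j)).neg
    exact (((continuous_apply i).sub (continuous_apply j)).norm.mul hQi).mul hQj
  have hcast : ∀ k : ℕ, 2 ≤ k → ((k - 1 : ℕ) : ℝ) = (k:ℝ) - 1 := by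
    intro k hk
    rw [Nat.cast_sub (by omega)]
    norm_num
  have hrknn : ∀ k : ℕ, 2 ≤ k → (0:ℝ) < (k:ℝ) * ((k:ℝ) - 1) := by
    intro k hk
    have h2 : (2:ℝ) ≤ (k:ℝ) := by exact_mod_cast hk
    nlinarith
  have core1 : ∀ (G : Set (ProbabilityMeasure (EuclideanSpace ℝ (Fin n)))) (ε : ℝ), 0 < ε →
      ∀ k : ℕ, 2 ≤ k →
      JkQ K (fun y => ((Q y : ℝ) : EReal)) ν (G ∩ U ε) k
        ≤ JkQ K (fun _ => (0:EReal)) ν G k * ENNReal.ofReal (Real.exp (-2 * (I - ε))) := by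
    intro G ε hε k hk
    have hkk := hrknn k hk
    have hr : (0:ℝ) ≤ (1:ℝ) / ((k:ℝ) * ((k:ℝ) - 1)) := by positivity
    have hk1 : (0:ℝ) ≤ (k:ℝ) - 1 := by nlinarith
    have hrpow : (Real.exp ((-2 * (I - ε)) * ((k:ℝ) * ((k:ℝ) - 1))))
          ^ ((1:ℝ) / ((k:ℝ) * ((k:ℝ) - 1))) = Real.exp (-2 * (I - ε)) := by
      rw [← Real.exp_mul]
      congr 1
      have hk1' : (k:ℝ) - 1 ≠ 0 := by
        have h2 : (2:ℝ) ≤ (k:ℝ) := by exact_mod_cast hk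
        linarith [(show (0:ℝ) < (k:ℝ) - 1 by linarith)]
      field_simp
    calc JkQ K (fun y => ((Q y : ℝ) : EReal)) ν (G ∩ U ε) k
        ≤ JkQ K (fun _ => (0:EReal)) ν G k *
            ENNReal.ofReal ((Real.exp ((-2 * (I - ε)) * ((k:ℝ) * ((k:ℝ) - 1))))
              ^ ((1:ℝ) / ((k:ℝ) * ((k:ℝ) - 1)))) := by
          refine aux_JkQ_le K _ _ ν _ G Set.inter_subset_left k hr
            (Real.exp_pos _) (hcontZ k) ?_
          rintro a ⟨haK, h, hm⟩
          obtain ⟨hlow, -⟩ := hsumb ε hε k hk a haK ⟨h, hm.2⟩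
          rw [aux_VDM Q k a, mul_pow]
          refine mul_le_mul_of_nonneg_left ?_ (sq_nonneg _)
          have hsq : Real.exp (-(((k - 1 : ℕ):ℝ) * ∑ j, Q (a j))) ^ 2
              = Real.exp (-2 * (((k:ℝ) - 1) * ∑ j, Q (a j))) := by
            rw [hcast k hk, sq, ← Real.exp_add]
            congr 1
            ring
          rw [hsq]
          refine Real.exp_le_exp.2 ?_
          nlinarith [mul_le_mul_of_nonneg_left hlow hk1]
      _ = _ := by rw [hrpow]
  have core2 : ∀ (G : Set (ProbabilityMeasure (EuclideanSpace ℝ (Fin n)))) (ε : ℝ), 0 < ε →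
      ∀ k : ℕ, 2 ≤ k →
      JkQ K (fun _ => (0:EReal)) ν (G ∩ U ε) k
        ≤ JkQ K (fun y => ((Q y : ℝ) : EReal)) ν G k
            * ENNReal.ofReal (Real.exp (2 * (I + ε))) := by
    intro G ε hε k hk
    have hkk := hrknn k hk
    have hr : (0:ℝ) ≤ (1:ℝ) / ((k:ℝ) * ((k:ℝ) - 1)) := by positivity
    have hk1 : (0:ℝ) ≤ (k:ℝ) - 1 := by nlinarith
    have hrpow : (Real.exp ((2 * (I + ε)) * ((k:ℝ) * ((k:ℝ) - 1))))
          ^ ((1:ℝ) / ((k:ℝ) * ((k:ℝ) - 1))) = Real.exp (2 * (I + ε)) := by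
      rw [← Real.exp_mul]
      congr 1
      have hk1' : (k:ℝ) - 1 ≠ 0 := by
        have h2 : (2:ℝ) ≤ (k:ℝ) := by exact_mod_cast hk
        linarith [(show (0:ℝ) < (k:ℝ) - 1 by linarith)]
      field_simp
    calc JkQ K (fun _ => (0:EReal)) ν (G ∩ U ε) k
        ≤ JkQ K (fun y => ((Q y : ℝ) : EReal)) ν G k *
            ENNReal.ofReal ((Real.exp ((2 * (I + ε)) * ((k:ℝ) * ((k:ℝ) - 1))))
              ^ ((1:ℝ) / ((k:ℝ) * ((k:ℝ) - 1)))) := by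
          refine aux_JkQ_le K _ _ ν _ G Set.inter_subset_left k hr
            (Real.exp_pos _) (hcontQ k) ?_
          rintro a ⟨haK, h, hm⟩
          obtain ⟨-, hhigh⟩ := hsumb ε hε k hk a haK ⟨h, hm.2⟩
          rw [aux_VDM Q k a, mul_pow, mul_assoc]
          refine le_mul_of_one_le_right (sq_nonneg _) ?_
          rw [hcast k hk, sq, ← Real.exp_add, ← Real.exp_add]
          rw [show -(((k:ℝ) - 1) * ∑ j, Q (a j)) + -(((k:ℝ) - 1) * ∑ j, Q (a j))
              + 2 * (I + ε) * ((k:ℝ) * ((k:ℝ) - 1))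
              = 2 * (((k:ℝ) - 1) * ((k:ℝ) * (I + ε) - ∑ j, Q (a j))) from by ring]
          refine Real.one_le_exp ?_
          have hmm := mul_nonneg hk1 (sub_nonneg.2 hhigh)
          linarith
      _ = _ := by rw [hrpow]
  have hbne : ∀ t : ℝ, (ENNReal.ofReal (Real.exp t)) ≠ 0 :=
    fun t => (ENNReal.ofReal_pos.2 (Real.exp_pos t)).ne'
  have hbnt : ∀ t : ℝ, (ENNReal.ofReal (Real.exp t)) ≠ ⊤ := fun t => ENNReal.ofReal_ne_top
  have key : ∀ (Lf : (ℕ → ℝ≥0∞) → ℝ≥0∞),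
      (∀ u v : ℕ → ℝ≥0∞, (∀ k, 2 ≤ k → u k ≤ v k) → Lf u ≤ Lf v) →
      (∀ (u : ℕ → ℝ≥0∞) (c : ℝ≥0∞), c ≠ 0 → c ≠ ⊤ → Lf (fun k => u k * c) = Lf u * c) →
      (⨅ (G : Set (ProbabilityMeasure (EuclideanSpace ℝ (Fin n)))) (_ : IsOpen G) (_ : μ ∈ G),
          Lf (fun k => JkQ K (fun y => ((Q y : ℝ) : EReal)) ν G k))
        = (⨅ (G : Set (ProbabilityMeasure (EuclideanSpace ℝ (Fin n)))) (_ : IsOpen G)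
              (_ : μ ∈ G), Lf (fun k => JkQ K (fun _ => (0:EReal)) ν G k))
            * ENNReal.ofReal (Real.exp (-2 * I)) := by
    intro Lf hmono hmul
    set A := ⨅ (G : Set (ProbabilityMeasure (EuclideanSpace ℝ (Fin n)))) (_ : IsOpen G)
        (_ : μ ∈ G), Lf (fun k => JkQ K (fun y => ((Q y : ℝ) : EReal)) ν G k) with hA
    set B := ⨅ (G : Set (ProbabilityMeasure (EuclideanSpace ℝ (Fin n)))) (_ : IsOpen G)
        (_ : μ ∈ G), Lf (fun k => JkQ K (fun _ => (0:EReal)) ν G k) with hB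
    refine le_antisymm ?_ ?_
    · refine aux_le_of_forall_exp _ _ (fun δ hδ => ?_)
      have hε : 0 < δ/2 := by linarith
      have step : ∀ (G : Set (ProbabilityMeasure (EuclideanSpace ℝ (Fin n)))),
          IsOpen G → μ ∈ G →
          A ≤ Lf (fun k => JkQ K (fun _ => (0:EReal)) ν G k)
              * ENNReal.ofReal (Real.exp (-2 * (I - δ/2))) := by
        intro G hGo hGμ
        have h1 : A ≤ Lf (fun k => JkQ K (fun y => ((Q y : ℝ) : EReal)) ν (G ∩ U (δ/2)) k) := by
          refine iInf_le_of_le (G ∩ U (δ/2)) ?_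
          refine iInf_le_of_le (hGo.inter (hUopen _)) ?_
          exact iInf_le _ ⟨hGμ, hμU _ hε⟩
        refine h1.trans ?_
        rw [← hmul _ _ (hbne _) (hbnt _)]
        exact hmono _ _ (fun k hk => core1 G (δ/2) hε k hk)
      have step2 : A * (ENNReal.ofReal (Real.exp (-2 * (I - δ/2))))⁻¹ ≤ B := by
        refine le_iInf fun G => le_iInf fun hGo => le_iInf fun hGμ => ?_
        exact (aux_le_mul_iff (hbne _) (hbnt _)).1 (step G hGo hGμ)
      have step3 : A ≤ B * ENNReal.ofReal (Real.exp (-2 * (I - δ/2))) :=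
        (aux_le_mul_iff (hbne _) (hbnt _)).2 step2
      refine step3.trans_eq ?_
      rw [show -2 * (I - δ/2) = -2 * I + δ from by ring, ← aux_ofReal_exp_mul, ← mul_assoc]
    · have hBA : B ≤ A * ENNReal.ofReal (Real.exp (2 * I)) := by
        refine aux_le_of_forall_exp _ _ (fun δ hδ => ?_)
        have hε : 0 < δ/2 := by linarith
        have step : ∀ (G : Set (ProbabilityMeasure (EuclideanSpace ℝ (Fin n)))),
            IsOpen G → μ ∈ G →
            B ≤ Lf (fun k => JkQ K (fun y => ((Q y : ℝ) : EReal)) ν G k)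
                * ENNReal.ofReal (Real.exp (2 * (I + δ/2))) := by
          intro G hGo hGμ
          have h1 : B ≤ Lf (fun k => JkQ K (fun _ => (0:EReal)) ν (G ∩ U (δ/2)) k) := by
            refine iInf_le_of_le (G ∩ U (δ/2)) ?_
            refine iInf_le_of_le (hGo.inter (hUopen _)) ?_
            exact iInf_le _ ⟨hGμ, hμU _ hε⟩
          refine h1.trans ?_
          rw [← hmul _ _ (hbne _) (hbnt _)]
          exact hmono _ _ (fun k hk => core2 G (δ/2) hε k hk)
        have step2 : B * (ENNReal.ofReal (Real.exp (2 * (I + δ/2))))⁻¹ ≤ A := by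
          refine le_iInf fun G => le_iInf fun hGo => le_iInf fun hGμ => ?_
          exact (aux_le_mul_iff (hbne _) (hbnt _)).1 (step G hGo hGμ)
        have step3 : B ≤ A * ENNReal.ofReal (Real.exp (2 * (I + δ/2))) :=
          (aux_le_mul_iff (hbne _) (hbnt _)).2 step2
        refine step3.trans_eq ?_
        rw [show 2 * (I + δ/2) = 2 * I + δ from by ring, ← aux_ofReal_exp_mul, ← mul_assoc]
      calc B * ENNReal.ofReal (Real.exp (-2 * I))
          ≤ A * ENNReal.ofReal (Real.exp (2 * I)) * ENNReal.ofReal (Real.exp (-2 * I)) :=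
            mul_le_mul_left hBA _
        _ = A := by
            rw [mul_assoc, aux_ofReal_exp_mul,
              show (2 * I + -2 * I : ℝ) = 0 from by ring, Real.exp_zero,
              ENNReal.ofReal_one, mul_one]
  constructor
  · have hres := key (fun u => Filter.limsup u Filter.atTop)
      (fun u v h => Filter.limsup_le_limsup
        (by filter_upwards [Filter.eventually_ge_atTop 2] with k hk using h k hk))
      (fun u c _ hct => aux_limsup_mul_const u c hct)
    simpa only [JbarQ] using hres
  · have hres := key (fun u => Filter.liminf u Filter.atTop)
      (fun u v h => Filter.liminf_le_liminf
        (by filter_upwards [Filter.eventually_ge_atTop 2] with k hk using h k hk))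
      (fun u c hc0 hct => aux_liminf_mul_const u c hc0 hct)
    simpa only [JlowQ] using hres

end
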